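/- Suppose F: R^{m×r} × R^{r×n} → R is L-smooth, and S is a random-k sketching matrix (I uniform over size-k subsets of {1,...,r}). Then the averaged function G(B, A) = E_S[F(B S, A)] is L·(r/k)-smooth with respect to (B, A). -/

import Mathlib

open Matrix

attribute [local instance] Matrix.frobeniusNormedAddCommGroup Matrix.frobeniusNormedSpace

/-- The random-`k` sketching matrix associated with an index set `I ⊆ {1,…,r}`. -/
noncomputable def sketch {r : ℕ} (k : ℕ) (I : Finset (Fin r)) : Matrix (Fin r) (Fin r) ℝ :=
  Matrix.diagonal (fun j => if j ∈ I then (r : ℝ) / k else 0)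

/-- The stacked pair `[B; A]` equipped with the ℓ²-product of Frobenius norms. -/
abbrev LoraPair (m n r : ℕ) :=
  WithLp 2 (Matrix (Fin m) (Fin r) ℝ × Matrix (Fin r) (Fin n) ℝ)

/-- The operator norm on `LoraPair m n r →L[ℝ] ℝ` (no longer found automatically). -/
noncomputable instance LoraPair.instNormCLM (m n r : ℕ) : Norm (LoraPair m n r →L[ℝ] ℝ) :=
  @ContinuousLinearMap.hasOpNorm ℝ ℝ _ _ _ _ _ _ _ _ _

/-- The map `[B; A] ↦ [B S; A]` for the sketching matrix `S` of index set `I`. -/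
noncomputable def sketchPair {m n r : ℕ} (k : ℕ) (I : Finset (Fin r))
    (X : LoraPair m n r) : LoraPair m n r :=
  (WithLp.equiv 2 _).symm
    (((WithLp.equiv 2 _) X).1 * sketch k I, ((WithLp.equiv 2 _) X).2)

/-!
Write `T_I : [B; A] ↦ [B S_I; A]`, a linear map, so that `∇G(X) = avg_I (∇F(T_I X) ∘ T_I)`.
Testing `∇G X - ∇G Y` against `Z`, smoothness of `F` and Cauchy–Schwarz over `I` give
`|(∇G X - ∇G Y) Z| ≤ L · avg_I ‖T_I (X - Y)‖ ‖T_I Z‖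
  ≤ L · (avg_I ‖T_I (X - Y)‖²)^{1/2} (avg_I ‖T_I Z‖²)^{1/2}`.
A column index lies in a fraction `k / r` of the `k`-subsets, and `S_I` scales it by `r / k`,
so `avg_I ‖B S_I‖² = (r / k) ‖B‖²`; since `r / k ≥ 1` this gives `avg_I ‖T_I W‖² ≤ (r / k) ‖W‖²`.
-/

open Finset

section Combinatorics

variable {α : Type*} [DecidableEq α]

theorem card_filter_mem_powersetCard {s : Finset α} {a : α} (ha : a ∈ s) {k : ℕ} (hk : 0 < k) :
    #{t ∈ s.powersetCard k | a ∈ t} = (#s - 1).choose (k - 1) := by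
  have hnot : {t ∈ s.powersetCard k | a ∉ t} = (s.erase a).powersetCard k := by
    ext t
    simp only [mem_filter, mem_powersetCard, subset_erase]
    tauto
  have hsplit := card_filter_add_card_filter_not (s := s.powersetCard k) (p := (a ∈ ·))
  rw [hnot, card_powersetCard, card_powersetCard, card_erase_of_mem ha,
    Nat.choose_eq_choose_pred_add (card_pos.2 ⟨a, ha⟩) hk] at hsplit
  omega

theorem sum_powersetCard_sum {M : Type*} [AddCommMonoid M] (s : Finset α) {k : ℕ} (hk : 0 < k)
    (g : α → M) :
    ∑ t ∈ s.powersetCard k, ∑ a ∈ t, g a = (#s - 1).choose (k - 1) • ∑ a ∈ s, g a := by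
  rw [sum_comm' (t' := s) (s' := fun a => {t ∈ s.powersetCard k | a ∈ t}), smul_sum]
  · refine sum_congr rfl fun a ha => ?_
    rw [sum_const, card_filter_mem_powersetCard ha hk]
  · intro t a
    simp only [mem_filter, mem_powersetCard]
    exact ⟨fun h => ⟨h, h.1.1 h.2⟩, fun h => h.1⟩

end Combinatorics

theorem Nat.cast_mul_choose_pred (n : ℕ) {k : ℕ} (hk : 0 < k) :
    (n : ℝ) * (n - 1).choose (k - 1) = n.choose k * k := by
  obtain ⟨k, rfl⟩ := Nat.exists_eq_add_of_le' hk
  rcases n with _ | n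
  · simp
  · push_cast [Nat.add_one_sub_one]
    exact_mod_cast Nat.add_one_mul_choose_eq n k

theorem Matrix.frobenius_norm_sq {ι κ E : Type*} [Fintype ι] [Fintype κ] [NormedAddCommGroup E]
    (A : Matrix ι κ E) : ‖A‖ ^ 2 = ∑ i, ∑ j, ‖A i j‖ ^ 2 := by
  rw [frobenius_norm_def, ← Real.rpow_natCast, ← Real.rpow_mul (by positivity)]
  norm_num

section Smoothness

variable {E E' F : Type*} [NormedAddCommGroup E] [NormedSpace ℝ E]
  [NormedAddCommGroup E'] [NormedSpace ℝ E'] [NormedAddCommGroup F] [NormedSpace ℝ F]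
  {ι : Type*} {s : Finset ι} {T : ι → E →L[ℝ] E'} {C : ℝ}

theorem sum_norm_mul_norm_le_of_sum_norm_sq_le (hC : 0 ≤ C)
    (hT : ∀ x, ∑ i ∈ s, ‖T i x‖ ^ 2 ≤ C * ‖x‖ ^ 2) (x y : E) :
    ∑ i ∈ s, ‖T i x‖ * ‖T i y‖ ≤ C * (‖x‖ * ‖y‖) := by
  refine le_of_pow_le_pow_left₀ two_ne_zero (by positivity) ?_
  calc (∑ i ∈ s, ‖T i x‖ * ‖T i y‖) ^ 2
      ≤ (∑ i ∈ s, ‖T i x‖ ^ 2) * ∑ i ∈ s, ‖T i y‖ ^ 2 := sum_mul_sq_le_sq_mul_sq _ _ _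
    _ ≤ (C * ‖x‖ ^ 2) * (C * ‖y‖ ^ 2) := by gcongr; exacts [hT x, hT y]
    _ = (C * (‖x‖ * ‖y‖)) ^ 2 := by ring

theorem hasFDerivAt_sum_comp {f : E' → F} (hf : Differentiable ℝ f) (x : E) :
    HasFDerivAt (fun x => ∑ i ∈ s, f (T i x)) (∑ i ∈ s, (fderiv ℝ f (T i x)).comp (T i)) x :=
  HasFDerivAt.fun_sum fun i _ => (hf (T i x)).hasFDerivAt.comp x (T i).hasFDerivAt

theorem norm_sum_fderiv_comp_sub_le {f : E' → F} {L : ℝ} (hL : 0 ≤ L)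
    (hLip : ∀ u v, ‖fderiv ℝ f u - fderiv ℝ f v‖ ≤ L * ‖u - v‖) (hC : 0 ≤ C)
    (hT : ∀ x, ∑ i ∈ s, ‖T i x‖ ^ 2 ≤ C * ‖x‖ ^ 2) (x y : E) :
    ‖∑ i ∈ s, (fderiv ℝ f (T i x)).comp (T i) - ∑ i ∈ s, (fderiv ℝ f (T i y)).comp (T i)‖
      ≤ L * C * ‖x - y‖ := by
  rw [← sum_sub_distrib]
  refine ContinuousLinearMap.opNorm_le_bound _ (by positivity) fun z => ?_
  calc ‖(∑ i ∈ s, ((fderiv ℝ f (T i x)).comp (T i) - (fderiv ℝ f (T i y)).comp (T i))) z‖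
      ≤ ∑ i ∈ s, ‖(fderiv ℝ f (T i x) - fderiv ℝ f (T i y)) (T i z)‖ := by
        simpa only [_root_.sum_apply, _root_.sub_apply, ContinuousLinearMap.comp_apply] using
          norm_sum_le _ _
    _ ≤ ∑ i ∈ s, L * (‖T i (x - y)‖ * ‖T i z‖) := by
        gcongr with i
        calc _ ≤ ‖fderiv ℝ f (T i x) - fderiv ℝ f (T i y)‖ * ‖T i z‖ :=
              ContinuousLinearMap.le_opNorm _ _
          _ ≤ L * ‖T i x - T i y‖ * ‖T i z‖ := by gcongr; exact hLip _ _
          _ = L * (‖T i (x - y)‖ * ‖T i z‖) := by rw [map_sub, mul_assoc]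
    _ ≤ L * (C * (‖x - y‖ * ‖z‖)) := by
        rw [← mul_sum]
        gcongr
        exact sum_norm_mul_norm_le_of_sum_norm_sq_le hC hT _ _
    _ = L * C * ‖x - y‖ * ‖z‖ := by ring

theorem norm_fderiv_const_mul_sum_comp_sub_le {f : E' → ℝ} {L : ℝ} (hf : Differentiable ℝ f)
    (hL : 0 ≤ L) (hLip : ∀ u v, ‖fderiv ℝ f u - fderiv ℝ f v‖ ≤ L * ‖u - v‖) (hC : 0 ≤ C)
    (hT : ∀ x, ∑ i ∈ s, ‖T i x‖ ^ 2 ≤ C * ‖x‖ ^ 2) (c : ℝ) (x y : E) :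
    ‖fderiv ℝ (fun z => c * ∑ i ∈ s, f (T i z)) x - fderiv ℝ (fun z => c * ∑ i ∈ s, f (T i z)) y‖
      ≤ |c| * (L * C * ‖x - y‖) := by
  rw [((hasFDerivAt_sum_comp (s := s) (T := T) hf x).const_mul c).fderiv,
    ((hasFDerivAt_sum_comp (s := s) (T := T) hf y).const_mul c).fderiv, ← smul_sub, norm_smul,
    Real.norm_eq_abs]
  gcongr
  exact norm_sum_fderiv_comp_sub_le hL hLip hC hT x y

end Smoothness

section Sketch

variable {m n r k : ℕ}

theorem norm_mul_sketch_sq (B : Matrix (Fin m) (Fin r) ℝ) (I : Finset (Fin r)) :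
    ‖B * sketch k I‖ ^ 2 = ((r : ℝ) / k) ^ 2 * ∑ i, ∑ j ∈ I, B i j ^ 2 := by
  simp only [frobenius_norm_sq, sketch, mul_diagonal, mul_sum, Real.norm_eq_abs, sq_abs, mul_ite,
    mul_zero, ite_pow, ne_eq, OfNat.ofNat_ne_zero, not_false_eq_true, zero_pow, sum_ite_mem,
    univ_inter, mul_pow, mul_comm]

theorem sum_norm_mul_sketch_sq (hk : 0 < k) (B : Matrix (Fin m) (Fin r) ℝ) :
    ∑ I ∈ (univ : Finset (Fin r)).powersetCard k, ‖B * sketch k I‖ ^ 2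
      = (r.choose k : ℝ) * (r / k) * ‖B‖ ^ 2 := by
  have hk' : (k : ℝ) ≠ 0 := by positivity
  simp_rw [norm_mul_sketch_sq, ← mul_sum]
  rw [sum_comm, frobenius_norm_sq]
  simp_rw [sum_powersetCard_sum _ hk, ← smul_sum, card_univ, Fintype.card_fin, nsmul_eq_mul,
    Real.norm_eq_abs, sq_abs]
  rw [← mul_assoc]
  congr 1
  field_simp
  linear_combination (r : ℝ) * Nat.cast_mul_choose_pred r hk

@[simp] theorem sketchPair_fst (I : Finset (Fin r)) (X : LoraPair m n r) :
    (sketchPair k I X).fst = X.fst * sketch k I := rfl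

@[simp] theorem sketchPair_snd (I : Finset (Fin r)) (X : LoraPair m n r) :
    (sketchPair k I X).snd = X.snd := rfl

-- `sketchPairL k I X` unfolds to `sketchPair k I X`; the main proof uses it only through this.
noncomputable def sketchPairL (k : ℕ) (I : Finset (Fin r)) :
    LoraPair m n r →L[ℝ] LoraPair m n r :=
  (WithLp.prodContinuousLinearEquiv 2 ℝ _ _).symm.toContinuousLinearMap ∘L
    ((mulRightLinearMap (Fin m) ℝ (sketch k I)).toContinuousLinearMap.prodMap
      (ContinuousLinearMap.id ℝ _)) ∘L
    (WithLp.prodContinuousLinearEquiv 2 ℝ _ _).toContinuousLinearMap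

theorem sum_norm_sketchPair_sq_le (hk : 0 < k) (hkr : k ≤ r) (X : LoraPair m n r) :
    ∑ I ∈ (univ : Finset (Fin r)).powersetCard k, ‖sketchPair k I X‖ ^ 2
      ≤ (r.choose k : ℝ) * (r / k) * ‖X‖ ^ 2 := by
  have hρ : 1 ≤ (r : ℝ) / k := by
    rw [one_le_div (by positivity)]
    exact_mod_cast hkr
  have hC : (0 : ℝ) ≤ r.choose k := by positivity
  calc ∑ I ∈ (univ : Finset (Fin r)).powersetCard k, ‖sketchPair k I X‖ ^ 2
      = r.choose k * (r / k) * ‖X.fst‖ ^ 2 + r.choose k * ‖X.snd‖ ^ 2 := by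
        simp_rw [WithLp.prod_norm_sq_eq_of_L2, sketchPair_fst, sketchPair_snd, sum_add_distrib,
          sum_norm_mul_sketch_sq hk, sum_const, card_powersetCard, card_univ, Fintype.card_fin,
          nsmul_eq_mul]
    _ ≤ r.choose k * (r / k) * ‖X.fst‖ ^ 2 + r.choose k * (r / k) * ‖X.snd‖ ^ 2 := by
        gcongr
        exact le_mul_of_one_le_right hC hρ
    _ = r.choose k * (r / k) * ‖X‖ ^ 2 := by
        rw [WithLp.prod_norm_sq_eq_of_L2 X]
        ring

end Sketch

/-- If `F` is `L`-smooth in the stacked variable `[B; A]` (Frobenius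
norms) and `S` is a random-`k` sketching matrix with `I` uniform over size-`k` subsets of
`{1,…,r}`, then the averaged function `G(B,A) = E_S[F(B S, A)]` is `L·(r/k)`-smooth. -/
theorem sketched_smoothness_expectation (m n r k : ℕ) (hk : 1 ≤ k) (hkr : k ≤ r)
    (L : ℝ) (F : LoraPair m n r → ℝ)
    (hdiff : Differentiable ℝ F)
    (hLip : ∀ X Y, ‖fderiv ℝ F X - fderiv ℝ F Y‖ ≤ L * ‖X - Y‖) :
    Differentiable ℝ (fun X : LoraPair m n r =>
        (((Finset.univ : Finset (Fin r)).powersetCard k).card : ℝ)⁻¹ *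
          ∑ I ∈ (Finset.univ : Finset (Fin r)).powersetCard k, F (sketchPair k I X)) ∧
    ∀ X Y : LoraPair m n r,
      ‖fderiv ℝ (fun Z : LoraPair m n r =>
            (((Finset.univ : Finset (Fin r)).powersetCard k).card : ℝ)⁻¹ *
              ∑ I ∈ (Finset.univ : Finset (Fin r)).powersetCard k, F (sketchPair k I Z)) X
          - fderiv ℝ (fun Z : LoraPair m n r =>
            (((Finset.univ : Finset (Fin r)).powersetCard k).card : ℝ)⁻¹ *
              ∑ I ∈ (Finset.univ : Finset (Fin r)).powersetCard k, F (sketchPair k I Z)) Y‖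
        ≤ L * ((r : ℝ) / k) * ‖X - Y‖ := by
  set P := (univ : Finset (Fin r)).powersetCard k
  have hP : (#P : ℝ) = r.choose k := by simp [P]
  refine ⟨fun X =>
    ((hasFDerivAt_sum_comp (s := P) (T := sketchPairL k) hdiff X).const_mul _).differentiableAt,
    fun X Y => ?_⟩
  rcases eq_or_ne X Y with rfl | hXY
  · rw [sub_self, sub_self, norm_zero, mul_zero]
    exact ContinuousLinearMap.opNorm_zero.le
  have hL : 0 ≤ L := nonneg_of_mul_nonneg_left
    ((ContinuousLinearMap.opNorm_nonneg _).trans (hLip X Y)) (norm_pos_iff.2 (sub_ne_zero.2 hXY))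
  calc _ ≤ |(#P : ℝ)⁻¹| * (L * (r.choose k * (r / k)) * ‖X - Y‖) :=
        norm_fderiv_const_mul_sum_comp_sub_le (T := sketchPairL k) hdiff hL hLip (by positivity)
          (sum_norm_sketchPair_sq_le hk hkr) _ X Y
    _ = L * (r / k) * ‖X - Y‖ := by
        rw [abs_of_nonneg (by positivity), hP]
        field_simp [(Nat.choose_pos hkr).ne']
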